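/- arXiv:2102.07722 — 2 statements merged into one kernel-verified Lean document; each statement's English description precedes it below -/
import Mathlib

section
/- Let β = (β_n) be a Cantor real base and x ∈ [0,1]. The greedy β-expansion of x is lexicographically maximal among all β-representations of x: if a ∈ ℕ^ℕ satisfies val_β(a) = x, then a ≤_lex d_β(x). -/
open Filter

/-- Product of the first `n+1` terms of the base sequence. -/
noncomputable def cprod (β : ℕ → ℝ) (n : ℕ) : ℝ := ∏ i ∈ Finset.range (n+1), β i

/-- A Cantor real base: all terms exceed 1 and the partial products tend to infinity. -/
def IsCantorBase (β : ℕ → ℝ) : Prop :=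
  (∀ n, 1 < β n) ∧ Tendsto (cprod β) atTop atTop

/-- Value of a real-digit sequence in a Cantor base. -/
noncomputable def valB (β : ℕ → ℝ) (a : ℕ → ℝ) : ℝ := ∑' n, a n / cprod β n

/-- Value of a natural-digit sequence in a Cantor base. -/
noncomputable def valN (β : ℕ → ℝ) (a : ℕ → ℕ) : ℝ := valB β (fun n => (a n : ℝ))

/-- Remainders of the greedy algorithm. -/
noncomputable def greedyRem (β : ℕ → ℝ) (x : ℝ) : ℕ → ℝ
  | 0 => β 0 * x - ⌊β 0 * x⌋
  | n+1 => β (n+1) * greedyRem β x n - ⌊β (n+1) * greedyRem β x n⌋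

/-- Digits of the greedy expansion. -/
noncomputable def greedy (β : ℕ → ℝ) (x : ℝ) : ℕ → ℕ
  | 0 => (⌊β 0 * x⌋).toNat
  | n+1 => (⌊β (n+1) * greedyRem β x n⌋).toNat

/-- Remainders of the quasi-greedy algorithm started at `1`:
at each step the largest digit keeping the remainder strictly positive is chosen. -/
noncomputable def qRem (β : ℕ → ℝ) : ℕ → ℝ
  | 0 => β 0 - (⌈β 0⌉ - 1)
  | n+1 => β (n+1) * qRem β n - (⌈β (n+1) * qRem β n⌉ - 1)

/-- Digits of the quasi-greedy expansion of `1`. -/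
noncomputable def quasiGreedy (β : ℕ → ℝ) : ℕ → ℕ
  | 0 => (⌈β 0⌉ - 1).toNat
  | n+1 => (⌈β (n+1) * qRem β n⌉ - 1).toNat

/-- The `n`-shifted base `β^{(n)}`. -/
def shiftBase (β : ℕ → ℝ) (n : ℕ) : ℕ → ℝ := fun k => β (n + k)

/-- The `n`-fold shift `σ^n` of a digit sequence. -/
def shiftSeq (a : ℕ → ℕ) (n : ℕ) : ℕ → ℕ := fun k => a (n + k)

/-- Strict lexicographic order on digit sequences. -/
def LexLt (a b : ℕ → ℕ) : Prop := ∃ ℓ, (∀ k, k < ℓ → a k = b k) ∧ a ℓ < b ℓ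

/-- Lexicographic order on digit sequences. -/
def LexLe (a b : ℕ → ℕ) : Prop := LexLt a b ∨ a = b

/-- The set of greedy expansions of points of `[0,1)`. -/
def Dset (β : ℕ → ℝ) : Set (ℕ → ℕ) := {a | ∃ x ∈ Set.Ico (0:ℝ) 1, a = greedy β x}

open Finset

/-! If `a` agrees with the greedy expansion `d_β(x)` before position `ℓ`, then comparing the tail
of `val_β(a) = x` with the greedy remainder gives `a_ℓ / ∏_{i ≤ ℓ} β_i ≤ r_{ℓ-1} / ∏_{i < ℓ} β_i`,
i.e. `a_ℓ ≤ β_ℓ r_{ℓ-1}`, and hence `a_ℓ ≤ ⌊β_ℓ r_{ℓ-1}⌋ = d_ℓ`. So at the first disagreement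
`a` carries the smaller digit. -/

lemma LexLe.of_forall_le_of_eqOn {a b : ℕ → ℕ}
    (h : ∀ ℓ, (∀ k < ℓ, a k = b k) → a ℓ ≤ b ℓ) : LexLe a b := by
  by_cases hab : a = b
  · exact Or.inr hab
  · classical
    have hex : ∃ n, a n ≠ b n := Function.ne_iff.1 hab
    have hagree : ∀ k < Nat.find hex, a k = b k := fun k hk => not_not.1 (Nat.find_min hex hk)
    exact Or.inl ⟨_, hagree, lt_of_le_of_ne (h _ hagree) (Nat.find_spec hex)⟩

section CantorBase

variable {β : ℕ → ℝ}

lemma cprod_pos (hβ : ∀ n, 0 < β n) (n : ℕ) : 0 < cprod β n :=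
  prod_pos fun i _ => hβ i

lemma digit_div_cprod_le_sub_sum (hβ : ∀ n, 0 < β n) {a : ℕ → ℕ}
    (hsum : Summable (fun n => (a n : ℝ) / cprod β n)) (ℓ : ℕ) :
    (a ℓ : ℝ) / cprod β ℓ ≤ valN β a - ∑ k ∈ range ℓ, (a k : ℝ) / cprod β k := by
  have hnonneg : ∀ n, 0 ≤ (a n : ℝ) / cprod β n := fun n => by
    have := cprod_pos hβ n; positivity
  have htail : (a ℓ : ℝ) / cprod β ℓ ≤ ∑' i, (a (i + ℓ) : ℝ) / cprod β (i + ℓ) := by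
    simpa using ((summable_nat_add_iff ℓ).2 hsum).le_tsum 0 fun j _ => hnonneg (j + ℓ)
  rw [valN, valB, ← hsum.sum_add_tsum_nat_add ℓ]
  linarith

end CantorBase

section Greedy

variable (β : ℕ → ℝ) (x : ℝ)

/-- The quantity `r_{n-1}` the greedy algorithm multiplies by `β n` at step `n`,
with the convention `r_{-1} = x`. -/
noncomputable def greedyPrevRem : ℕ → ℝ
  | 0 => x
  | n + 1 => greedyRem β x n

lemma greedyRem_eq (n : ℕ) :
    greedyRem β x n = β n * greedyPrevRem β x n - ⌊β n * greedyPrevRem β x n⌋ := by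
  cases n <;> rfl

lemma greedy_eq (n : ℕ) : greedy β x n = (⌊β n * greedyPrevRem β x n⌋).toNat := by
  cases n <;> rfl

variable {β x}

lemma greedyPrevRem_nonneg (hx : 0 ≤ x) : ∀ n, 0 ≤ greedyPrevRem β x n
  | 0 => hx
  | n + 1 => by
    rw [greedyPrevRem, greedyRem_eq]
    exact sub_nonneg.2 (Int.floor_le _)

lemma greedy_cast (hβ : ∀ n, 0 < β n) (hx : 0 ≤ x) (n : ℕ) :
    (greedy β x n : ℝ) = ⌊β n * greedyPrevRem β x n⌋ := by
  have h : 0 ≤ ⌊β n * greedyPrevRem β x n⌋ :=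
    Int.floor_nonneg.2 (mul_nonneg (hβ n).le (greedyPrevRem_nonneg hx n))
  rw [greedy_eq, ← Int.cast_natCast, Int.toNat_of_nonneg h]

lemma sub_sum_greedy (hβ : ∀ n, 0 < β n) (hx : 0 ≤ x) (n : ℕ) :
    x - ∑ k ∈ range n, (greedy β x k : ℝ) / cprod β k
      = greedyPrevRem β x n / ∏ i ∈ range n, β i := by
  induction n with
  | zero => simp [greedyPrevRem]
  | succ n ih =>
    have hP : 0 < ∏ i ∈ range n, β i := prod_pos fun i _ => hβ i
    have hβn := hβ n
    rw [sum_range_succ, ← sub_sub, ih, greedy_cast hβ hx, greedyPrevRem, greedyRem_eq,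
      cprod, prod_range_succ]
    field_simp

lemma le_greedy_of_eqOn (hβ : ∀ n, 0 < β n) (hx : 0 ≤ x) {a : ℕ → ℕ}
    (hsum : Summable (fun n => (a n : ℝ) / cprod β n)) (hval : valN β a = x) (ℓ : ℕ)
    (hagree : ∀ k < ℓ, a k = greedy β x k) : a ℓ ≤ greedy β x ℓ := by
  have hP : 0 < ∏ i ∈ range ℓ, β i := prod_pos fun i _ => hβ i
  have hbound := digit_div_cprod_le_sub_sum hβ hsum ℓ
  rw [hval, sum_congr rfl fun k hk => by rw [hagree k (mem_range.1 hk)],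
    sub_sum_greedy hβ hx, cprod, prod_range_succ, mul_comm, ← div_div,
    div_le_div_iff_of_pos_right hP, div_le_iff₀' (hβ ℓ)] at hbound
  rw [greedy_eq]
  have h := Int.toNat_le_toNat (Int.le_floor.2 (by exact_mod_cast hbound) :
    ((a ℓ : ℕ) : ℤ) ≤ ⌊β ℓ * greedyPrevRem β x ℓ⌋)
  rwa [Int.toNat_natCast] at h

end Greedy

theorem stmt_7 (β : ℕ → ℝ) (hβ : IsCantorBase β) (x : ℝ)
    (hx : x ∈ Set.Icc (0:ℝ) 1) (a : ℕ → ℕ)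
    (hsum : Summable (fun n => (a n : ℝ) / cprod β n)) (hval : valN β a = x) :
    LexLe a (greedy β x) := by
  have hβpos : ∀ n, 0 < β n := fun n => one_pos.trans (hβ.1 n)
  exact LexLe.of_forall_le_of_eqOn fun ℓ => le_greedy_of_eqOn hβpos hx.1 hsum hval ℓ
end

section
/- Let β = (β_n) be a Cantor real base. The map x ↦ d_β(x) from [0,1] to digit sequences is strictly increasing: for x, y ∈ [0,1], x < y if and only if d_β(x) <_lex d_β(y). -/
open Filter

/-!
The `n`-th greedy digit and remainder of `x` are the integer and fractional parts of
`t_n(x) = β_n r_{n-1}(x)` (with `r_{-1}(x) = x`). As long as the digits of `x` and `y`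
agree, the fractional parts cancel and `t_n(y) - t_n(x) = (β_0 ⋯ β_n)(y - x)`. At the first
differing digit `ℓ` the larger digit thus belongs to the larger number, and if no digit differs,
`(β_0 ⋯ β_n)|y - x| = |r_n(y) - r_n(x)| < 1` for all `n` forces `x = y` because the products
diverge. Totality of the lexicographic order then gives both directions.
-/

/-- `LexLt` is definitionally the strict order of the linear order `Lex (ℕ → ℕ)`. -/
theorem lexLt_or_lexLt_of_ne {a b : ℕ → ℕ} (h : a ≠ b) : LexLt a b ∨ LexLt b a :=
  lt_or_gt_of_ne (toLex_inj.not.mpr h)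

section Greedy

variable {β : ℕ → ℝ} {x y : ℝ}

theorem IsCantorBase.nonneg (hβ : IsCantorBase β) (n : ℕ) : 0 ≤ β n :=
  zero_le_one.trans (hβ.1 n).le

theorem cprod_nonneg (hβ : ∀ n, 0 ≤ β n) (n : ℕ) : 0 ≤ cprod β n :=
  Finset.prod_nonneg fun i _ => hβ i

theorem cprod_zero : cprod β 0 = β 0 := by simp [cprod]

theorem cprod_succ (n : ℕ) : cprod β (n + 1) = β (n + 1) * cprod β n := by
  rw [cprod, Finset.prod_range_succ, mul_comm]; rfl

noncomputable def greedyInput (β : ℕ → ℝ) (x : ℝ) : ℕ → ℝ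
  | 0 => β 0 * x
  | n + 1 => β (n + 1) * greedyRem β x n

theorem greedyRem_eq_fract (n : ℕ) : greedyRem β x n = Int.fract (greedyInput β x n) := by
  cases n <;> rfl

theorem greedy_eq_toNat_floor (n : ℕ) : greedy β x n = ⌊greedyInput β x n⌋.toNat := by
  cases n <;> rfl

theorem greedyRem_nonneg (n : ℕ) : 0 ≤ greedyRem β x n :=
  greedyRem_eq_fract n ▸ Int.fract_nonneg _

theorem greedyRem_lt_one (n : ℕ) : greedyRem β x n < 1 :=
  greedyRem_eq_fract n ▸ Int.fract_lt_one _

theorem greedyInput_nonneg (hβ : ∀ n, 0 ≤ β n) (hx : 0 ≤ x) (n : ℕ) :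
    0 ≤ greedyInput β x n := by
  cases n with
  | zero => exact mul_nonneg (hβ 0) hx
  | succ n => exact mul_nonneg (hβ _) (greedyRem_nonneg n)

theorem greedy_cast_eq_floor (hβ : ∀ n, 0 ≤ β n) (hx : 0 ≤ x) (n : ℕ) :
    (greedy β x n : ℤ) = ⌊greedyInput β x n⌋ := by
  rw [greedy_eq_toNat_floor, Int.toNat_of_nonneg (Int.floor_nonneg.2 (greedyInput_nonneg hβ hx n))]

theorem greedyInput_lt_of_greedy_lt {n : ℕ} (h : greedy β x n < greedy β y n) :
    greedyInput β x n < greedyInput β y n := by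
  by_contra! hle
  rw [greedy_eq_toNat_floor, greedy_eq_toNat_floor] at h
  exact h.not_ge (Int.toNat_le_toNat (Int.floor_mono hle))

theorem greedyRem_sub_greedyRem (hβ : ∀ n, 0 ≤ β n) (hx : 0 ≤ x) (hy : 0 ≤ y) {n : ℕ}
    (h : greedy β x n = greedy β y n) :
    greedyRem β y n - greedyRem β x n = greedyInput β y n - greedyInput β x n := by
  have hfloor : ⌊greedyInput β x n⌋ = ⌊greedyInput β y n⌋ := by
    rw [← greedy_cast_eq_floor hβ hx, ← greedy_cast_eq_floor hβ hy, h]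
  rw [greedyRem_eq_fract, greedyRem_eq_fract, Int.fract, Int.fract, hfloor]
  ring

theorem abs_greedyRem_sub_lt_one (n : ℕ) : |greedyRem β y n - greedyRem β x n| < 1 :=
  abs_sub_lt_of_nonneg_of_lt (greedyRem_nonneg n) (greedyRem_lt_one n) (greedyRem_nonneg n)
    (greedyRem_lt_one n)

theorem greedyInput_sub_of_greedy_eq (hβ : ∀ n, 0 ≤ β n) (hx : 0 ≤ x) (hy : 0 ≤ y) {n : ℕ}
    (h : ∀ k < n, greedy β x k = greedy β y k) :
    greedyInput β y n - greedyInput β x n = cprod β n * (y - x) := by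
  induction n with
  | zero => simp only [greedyInput, cprod_zero]; ring
  | succ n ih =>
    change β (n + 1) * greedyRem β y n - β (n + 1) * greedyRem β x n = _
    rw [← mul_sub, greedyRem_sub_greedyRem hβ hx hy (h n n.lt_succ_self),
      ih fun k hk => h k (hk.trans n.lt_succ_self), cprod_succ, mul_assoc]

theorem lt_of_lexLt_greedy (hβ : ∀ n, 0 ≤ β n) (hx : 0 ≤ x) (hy : 0 ≤ y)
    (h : LexLt (greedy β x) (greedy β y)) : x < y := by
  obtain ⟨ℓ, hpre, hlt⟩ := h
  have hsub := greedyInput_sub_of_greedy_eq hβ hx hy hpre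
  have hpos : 0 < cprod β ℓ * (y - x) := hsub ▸ sub_pos.2 (greedyInput_lt_of_greedy_lt hlt)
  exact sub_pos.1 (pos_of_mul_pos_right hpos (cprod_nonneg hβ ℓ))

theorem greedy_injOn (hβ : IsCantorBase β) : Set.InjOn (greedy β) (Set.Ici 0) := by
  intro x hx y hy h
  by_contra hne
  have hdist : 0 < |y - x| := abs_pos.2 (sub_ne_zero.2 (Ne.symm hne))
  obtain ⟨n, hn⟩ := (hβ.2.eventually_ge_atTop (1 / |y - x|)).exists
  have hprod : cprod β n * |y - x| < 1 := by
    rw [← abs_of_nonneg (cprod_nonneg hβ.nonneg n), ← abs_mul,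
      ← greedyInput_sub_of_greedy_eq hβ.nonneg hx hy fun k _ => congrFun h k,
      ← greedyRem_sub_greedyRem hβ.nonneg hx hy (congrFun h n)]
    exact abs_greedyRem_sub_lt_one n
  linarith [(div_le_iff₀ hdist).1 hn]

end Greedy

theorem stmt_8 (β : ℕ → ℝ) (hβ : IsCantorBase β) (x y : ℝ)
    (hx : x ∈ Set.Icc (0:ℝ) 1) (hy : y ∈ Set.Icc (0:ℝ) 1) :
    x < y ↔ LexLt (greedy β x) (greedy β y) := by
  refine ⟨fun hxy => ?_, lt_of_lexLt_greedy hβ.nonneg hx.1 hy.1⟩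
  have hne : greedy β x ≠ greedy β y := fun h => hxy.ne (greedy_injOn hβ hx.1 hy.1 h)
  rcases lexLt_or_lexLt_of_ne hne with hlex | hlex
  · exact hlex
  · exact absurd (lt_of_lexLt_greedy hβ.nonneg hy.1 hx.1 hlex) hxy.not_gt
end
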